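/- arXiv:2410.16725 — 3 statements merged into one kernel-verified Lean document; each statement's English description precedes it below -/
import Mathlib

section
/- Let T and N be linear relations in a complex vector space V and let λ ∈ ℂ. Then Ker_λ(T +̂ N) = R_{(T−λI)⁻¹ − (N−λI)⁻¹}, where for relations A and B the (operator-like) difference is A − B = {(u, x − y) : (u,x) ∈ A, (u,y) ∈ B}. -/
noncomputable section

variable {V : Type*} [AddCommGroup V] [Module ℂ V]

def domSet (A : Set (V × V)) : Set V := {x | ∃ y, (x, y) ∈ A}
def ranSet (A : Set (V × V)) : Set V := {y | ∃ x, (x, y) ∈ A}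
def mulSet (A : Set (V × V)) : Set V := {y | ((0 : V), y) ∈ A}
def kerl (A : Set (V × V)) (l : ℂ) : Set V := {x | (x, l • x) ∈ A}
def pointSpec (A : Set (V × V)) : Set ℂ := {l | ∃ x : V, x ≠ 0 ∧ (x, l • x) ∈ A}
/-- The relation `A − λI = {(x, y − λx) : (x,y) ∈ A}`. -/
def shiftRel (A : Set (V × V)) (l : ℂ) : Set (V × V) := {p | ∃ q ∈ A, p = (q.1, q.2 - l • q.1)}
def invRel (A : Set (V × V)) : Set (V × V) := {p | (p.2, p.1) ∈ A}
def imageRel (A : Set (V × V)) (M : Set V) : Set V := {y | ∃ x ∈ M, (x, y) ∈ A}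
def setSum (A B : Set V) : Set V := {z | ∃ a ∈ A, ∃ b ∈ B, z = a + b}
/-- Componentwise sum `T +̂ N = {(x+u, y+v) : (x,y) ∈ T, (u,v) ∈ N}`. -/
def cwSum (A B : Set (V × V)) : Set (V × V) := {p | ∃ a ∈ A, ∃ b ∈ B, p = a + b}
/-- Operator-like difference `A − B = {(u, x − y) : (u,x) ∈ A, (u,y) ∈ B}`. -/
def diffRel (A B : Set (V × V)) : Set (V × V) :=
  {p | ∃ x y, (p.1, x) ∈ A ∧ (p.1, y) ∈ B ∧ p.2 = x - y}

theorem mem_invRel_shiftRel {A : Set (V × V)} {l : ℂ} {w x : V} :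
    (w, x) ∈ invRel (shiftRel A l) ↔ (x, w + l • x) ∈ A := by
  simp only [invRel, shiftRel, Set.mem_ofPred_eq, Prod.ext_iff]
  constructor
  · rintro ⟨⟨a, b⟩, hab, rfl, rfl⟩
    simpa using hab
  · exact fun h => ⟨_, h, rfl, by simp⟩

theorem mem_ranSet_diffRel_invRel_shiftRel {A B : Set (V × V)} {l : ℂ} {x : V} :
    x ∈ ranSet (diffRel (invRel (shiftRel A l)) (invRel (shiftRel B l))) ↔
      ∃ w a z, (a, w + l • a) ∈ A ∧ (z, w + l • z) ∈ B ∧ x = a - z := by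
  simp only [ranSet, diffRel, Set.mem_ofPred_eq, mem_invRel_shiftRel]

theorem mem_cwSum_submodule {A : Set (V × V)} {N : Submodule ℂ (V × V)} {p : V × V} :
    p ∈ cwSum A N ↔ ∃ a ∈ A, p - a ∈ N := by
  refine exists_congr fun a => and_congr_right fun _ => ⟨?_, fun h => ⟨p - a, h, by abel⟩⟩
  rintro ⟨b, hb, rfl⟩
  simpa using hb

/-- Proposition 3.1: `Ker_λ(T +̂ N) = R_{(T−λI)⁻¹ − (N−λI)⁻¹}`. -/
theorem statement9 (T N : Submodule ℂ (V × V)) (l : ℂ) :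
    kerl (cwSum (T : Set (V × V)) (N : Set (V × V))) l
      = ranSet (diffRel (invRel (shiftRel (T : Set (V × V)) l))
          (invRel (shiftRel (N : Set (V × V)) l))) := by
  ext x
  rw [kerl, Set.mem_ofPred_eq, mem_cwSum_submodule, mem_ranSet_diffRel_invRel_shiftRel]
  simp only [SetLike.mem_coe]
  constructor
  · rintro ⟨⟨a, b⟩, hab, hN⟩
    -- `b - l • a` is the value at `a` of `T - λI` and at `a - x` of `N - λI`
    refine ⟨b - l • a, a, a - x, by simpa using hab, ?_, by abel⟩
    convert N.neg_mem hN using 1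
    ext <;> simp only [Prod.fst_neg, Prod.fst_sub, Prod.snd_neg, Prod.snd_sub] <;> module
  · rintro ⟨w, a, z, ha, hz, rfl⟩
    refine ⟨_, ha, ?_⟩
    convert N.neg_mem hz using 1
    ext <;> simp only [Prod.fst_neg, Prod.fst_sub, Prod.snd_neg, Prod.snd_sub] <;> module
end
end

section
/- Let T and N be linear relations in a complex vector space V and let λ ∈ ℂ. Then Ker_λ(T +̂ N) = Ker_λ T + Ker_λ N holds if and only if (N − λI)⁻¹(R_{T−λI}) = D_{T∩N} + Ker_λ N and R_{T−λI} ∩ Ind N = ((T ∩ N) − λI)(Ker_λ N). -/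
noncomputable section

variable {V : Type*} [AddCommGroup V] [Module ℂ V]

lemma mem_shiftRel' {A : Set (V × V)} {l : ℂ} {x y : V} :
    (x, y) ∈ shiftRel A l ↔ (x, y + l • x) ∈ A := by
  constructor
  · rintro ⟨⟨q1, q2⟩, hq, he⟩
    rw [Prod.ext_iff] at he
    obtain ⟨h1, h2⟩ := he
    simp only at h1 h2
    subst h1
    have hy : y + l • x = q2 := by rw [h2]; abel
    rwa [hy]
  · intro h
    exact ⟨(x, y + l • x), h, by simp⟩

omit [AddCommGroup V] [Module ℂ V] in
lemma pair_eq {a b c d : V} (h1 : a = c) (h2 : b = d) : (a, b) = (c, d) := by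
  rw [h1, h2]

/-- Proposition 3.2: `Ker_λ(T +̂ N) = Ker_λ T + Ker_λ N` iff
`(N − λI)⁻¹(R_{T−λI}) = D_{T∩N} + Ker_λ N` and
`R_{T−λI} ∩ Ind N = ((T ∩ N) − λI)(Ker_λ N)`. -/
theorem statement10 (T N : Submodule ℂ (V × V)) (l : ℂ) :
    (kerl (cwSum (T : Set (V × V)) (N : Set (V × V))) l
        = setSum (kerl (T : Set (V × V)) l) (kerl (N : Set (V × V)) l)) ↔
    (imageRel (invRel (shiftRel (N : Set (V × V)) l)) (ranSet (shiftRel (T : Set (V × V)) l))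
        = setSum (domSet ((T ⊓ N : Submodule ℂ (V × V)) : Set (V × V)))
            (kerl (N : Set (V × V)) l) ∧
      ranSet (shiftRel (T : Set (V × V)) l) ∩ mulSet (N : Set (V × V))
        = imageRel (shiftRel ((T ⊓ N : Submodule ℂ (V × V)) : Set (V × V)) l)
            (kerl (N : Set (V × V)) l)) := by
  constructor
  · intro hK
    have hKsub : kerl (cwSum (T : Set (V × V)) (N : Set (V × V))) l
        ⊆ setSum (kerl (T : Set (V × V)) l) (kerl (N : Set (V × V)) l) := hK.le
    constructor
    · -- first set equality
      apply Set.Subset.antisymm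
      · rintro u ⟨w, hw, hu⟩
        -- hu : (w, u) ∈ invRel (shiftRel N l), i.e. (u, w) ∈ shiftRel N l
        have hun : (u, w + l • u) ∈ N := mem_shiftRel'.mp hu
        obtain ⟨a, ha⟩ := hw
        have hat : (a, w + l • a) ∈ T := mem_shiftRel'.mp ha
        -- a - u ∈ Ker_λ (T +̂ N)
        have hamu : a - u ∈ kerl (cwSum (T : Set (V × V)) (N : Set (V × V))) l := by
          refine ⟨(a, w + l • a), hat, -(u, w + l • u), N.neg_mem hun, ?_⟩
          simp only [Prod.neg_mk, Prod.mk_add_mk]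
          exact pair_eq (by abel) (by module)
        obtain ⟨p, hp, q, hq, hpq⟩ := hKsub hamu
        have ha' : a = p + q + u := by rw [← sub_eq_iff_eq_add]; exact hpq
        have hdq : (a - p, w + l • (a - p)) ∈ T ⊓ N := by
          constructor
          · have := T.sub_mem hat hp
            have e : (a - p, w + l • (a - p)) = (a, w + l • a) - (p, l • p) := by
              simp only [Prod.mk_sub_mk]
              exact pair_eq rfl (by module)
            rwa [e]
          · have := N.add_mem hun hq
            have e : (a - p, w + l • (a - p)) = (u, w + l • u) + (q, l • q) := by
              simp only [Prod.mk_add_mk]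
              refine pair_eq ?_ ?_
              · rw [ha']; abel
              · rw [ha']; module
            rwa [e]
        refine ⟨a - p, ⟨w + l • (a - p), hdq⟩, -q, ?_, ?_⟩
        · show (-q, l • (-q)) ∈ N
          have := N.neg_mem hq
          have e : (-q, l • (-q)) = -(q, l • q) := by
            simp only [Prod.neg_mk]
            exact pair_eq rfl (by module)
          rwa [e]
        · rw [ha']; abel
      · -- easy inclusion
        rintro z ⟨d, ⟨y, hdy⟩, q, hq, hz⟩
        have hdT : (d, y) ∈ T := hdy.1
        have hdN : (d, y) ∈ N := hdy.2
        have hqN : (q, l • q) ∈ N := hq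
        refine ⟨y - l • d, ⟨d, mem_shiftRel'.mpr ?_⟩, ?_⟩
        · have e : (d, y - l • d + l • d) = (d, y) := pair_eq rfl (by module)
          rwa [e]
        · -- (z, y - l•d) ∈ shiftRel N l, i.e. (z, y - l•d + l•z) ∈ N
          show (z, y - l • d) ∈ shiftRel (N : Set (V × V)) l
          refine mem_shiftRel'.mpr ?_
          have := N.add_mem hdN hqN
          have e : (z, y - l • d + l • z) = (d, y) + (q, l • q) := by
            simp only [Prod.mk_add_mk]
            exact pair_eq hz (by rw [hz]; module)
          rwa [e]
    · -- second set equality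
      apply Set.Subset.antisymm
      · rintro w ⟨⟨a, ha⟩, hm⟩
        have hat : (a, w + l • a) ∈ T := mem_shiftRel'.mp ha
        have h0w : ((0 : V), w) ∈ N := hm
        have haK : a ∈ kerl (cwSum (T : Set (V × V)) (N : Set (V × V))) l := by
          refine ⟨(a, w + l • a), hat, ((0 : V), -w), ?_, ?_⟩
          · have := N.neg_mem h0w
            have e : ((0 : V), -w) = -((0 : V), w) := by
              simp only [Prod.neg_mk, neg_zero]
            rwa [e]
          · simp only [Prod.mk_add_mk]
            exact pair_eq (by abel) (by module)
        obtain ⟨p, hp, q, hq, hpq⟩ := hKsub haK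
        refine ⟨q, hq, mem_shiftRel'.mpr ?_⟩
        constructor
        · have := T.sub_mem hat hp
          have e : (q, w + l • q) = (a, w + l • a) - (p, l • p) := by
            simp only [Prod.mk_sub_mk]
            refine pair_eq ?_ ?_
            · rw [hpq]; abel
            · rw [hpq]; module
          rwa [e]
        · have := N.add_mem hq h0w
          have e : (q, w + l • q) = (q, l • q) + ((0 : V), w) := by
            simp only [Prod.mk_add_mk]
            exact pair_eq (by abel) (by abel)
          rwa [e]
      · rintro w ⟨q, hq, hw⟩
        have hqw : (q, w + l • q) ∈ T ⊓ N := mem_shiftRel'.mp hw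
        refine ⟨⟨q, mem_shiftRel'.mpr hqw.1⟩, ?_⟩
        show ((0 : V), w) ∈ N
        have := N.sub_mem hqw.2 hq
        have e : ((0 : V), w) = (q, w + l • q) - (q, l • q) := by
          simp only [Prod.mk_sub_mk]
          exact pair_eq (by abel) (by module)
        rwa [e]
  · rintro ⟨h1, h2⟩
    apply Set.Subset.antisymm
    · rintro x ⟨⟨a, b⟩, hab, ⟨u, v⟩, huv, hx⟩
      rw [Prod.ext_iff] at hx
      obtain ⟨hx1, hx2⟩ := hx
      simp only [Prod.mk_add_mk] at hx1 hx2
      set w : V := b - l • a with hwdef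
      have hat : (a, w + l • a) ∈ T := by
        have e : (a, w + l • a) = (a, b) := pair_eq rfl (by rw [hwdef]; module)
        rwa [e]
      have hun : (u, -w + l • u) ∈ N := by
        have e : (u, -w + l • u) = (u, v) := by
          refine pair_eq rfl ?_
          rw [hwdef]
          have : v = l • x - b := by rw [hx2]; abel
          rw [this, hx1]
          module
        rwa [e]
      -- u ∈ LHS of h1
      have hu1 : u ∈ imageRel (invRel (shiftRel (N : Set (V × V)) l))
          (ranSet (shiftRel (T : Set (V × V)) l)) := by
        refine ⟨-w, ⟨-a, mem_shiftRel'.mpr ?_⟩, ?_⟩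
        · have := T.neg_mem hat
          have e : (-a, -w + l • (-a)) = -(a, w + l • a) := by
            simp only [Prod.neg_mk]
            exact pair_eq rfl (by module)
          rwa [e]
        · show (u, -w) ∈ shiftRel (N : Set (V × V)) l
          exact mem_shiftRel'.mpr hun
      rw [h1] at hu1
      obtain ⟨d, ⟨y, hdy⟩, q, hq, hu⟩ := hu1
      set w' : V := y - l • d with hw'def
      have hdTN : (d, w' + l • d) ∈ T ⊓ N := by
        have e : (d, w' + l • d) = (d, y) := pair_eq rfl (by rw [hw'def]; module)
        rwa [e]
      -- -w - w' ∈ ran(T-λ) ∩ Ind N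
      have hww' : (-w - w') ∈ ranSet (shiftRel (T : Set (V × V)) l) ∩
          mulSet (N : Set (V × V)) := by
        constructor
        · refine ⟨-(a + d), mem_shiftRel'.mpr ?_⟩
          have := T.neg_mem (T.add_mem hat hdTN.1)
          have e : (-(a + d), -w - w' + l • (-(a + d)))
              = -((a, w + l • a) + (d, w' + l • d)) := by
            simp only [Prod.mk_add_mk, Prod.neg_mk]
            exact pair_eq rfl (by module)
          rwa [e]
        · show ((0 : V), -w - w') ∈ N
          have := N.sub_mem (N.sub_mem hun hdTN.2) hq
          have e : ((0 : V), -w - w') = ((u, -w + l • u) - (d, w' + l • d)) - (q, l • q) := by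
            simp only [Prod.mk_sub_mk]
            refine pair_eq ?_ ?_
            · rw [hu]; abel
            · rw [hu]; module
          rwa [e]
      rw [h2] at hww'
      obtain ⟨z, hz, hzw⟩ := hww'
      have hzTN : (z, (-w - w') + l • z) ∈ T ⊓ N := mem_shiftRel'.mp hzw
      refine ⟨a + d + z, ?_, q - z, ?_, ?_⟩
      · show (a + d + z, l • (a + d + z)) ∈ T
        have := T.add_mem (T.add_mem hat hdTN.1) hzTN.1
        have e : (a + d + z, l • (a + d + z))
            = ((a, w + l • a) + (d, w' + l • d)) + (z, (-w - w') + l • z) := by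
          simp only [Prod.mk_add_mk]
          exact pair_eq rfl (by module)
        rwa [e]
      · show (q - z, l • (q - z)) ∈ N
        have := N.sub_mem hq hz
        have e : (q - z, l • (q - z)) = (q, l • q) - (z, l • z) := by
          simp only [Prod.mk_sub_mk]
          exact pair_eq rfl (by module)
        rwa [e]
      · rw [hx1, hu]; abel
    · rintro z ⟨p, hp, q, hq, hz⟩
      refine ⟨(p, l • p), hp, (q, l • q), hq, ?_⟩
      simp only [Prod.mk_add_mk]
      exact pair_eq hz (by rw [hz]; module)
end
end

section
/- Let T and N be linear relations in a complex vector space V such that T ∩ N has trivial domain (D_{T∩N} = {0}), and set O = {λ ∈ ℂ : R_{T−λI} ∩ R_{N−λI} = Ind(T∩N)}. Then ℂ ∖ σ_p(T +̂ N) = O ∖ (σ_p(T) ∪ σ_p(N)); in particular σ_p(T +̂ N) = σ_p(T) ∪ σ_p(N) ∪ (ℂ ∖ O). -/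
noncomputable section

variable {V : Type*} [AddCommGroup V] [Module ℂ V]

/-- The set `O = {λ : R_{T−λI} ∩ R_{N−λI} = Ind(T∩N)}`. -/
def Oset (T N TN : Set (V × V)) : Set ℂ :=
  {l | ranSet (shiftRel T l) ∩ ranSet (shiftRel N l) = mulSet TN}

/-! An eigenvector `x` of `T +̂ N` at `λ` splits as `x = a - c` with `(a, a') ∈ T`, `(c, c') ∈ N`
and `a' - λa = c' - λc`, a common element `z` of `R_{T−λI}` and `R_{N−λI}`. When `z ∈ Ind(T∩N)`,
subtracting `(0, z)` makes `a` and `c` eigenvectors of `T` and `N`. Conversely, if `T +̂ N` has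
no eigenvector at `λ`, then `(a - c, λ(a - c)) ∈ T +̂ N` forces `a = c`, so `(a, a') ∈ T ∩ N` and
`a ∈ D_{T∩N} = {0}`. -/

lemma eq_zero_of_notMem_pointSpec {A : Set (V × V)} {l : ℂ} {x : V} (hl : l ∉ pointSpec A)
    (hx : (x, l • x) ∈ A) : x = 0 := by
  by_contra hx0
  exact hl ⟨x, hx0, hx⟩

lemma pointSpec_mono {A B : Set (V × V)} (h : A ⊆ B) : pointSpec A ⊆ pointSpec B :=
  fun _ ⟨x, hx0, hx⟩ => ⟨x, hx0, h hx⟩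

lemma subset_cwSum_left {W : Type*} [AddCommGroup W] (A : Set (W × W)) {B : Set (W × W)}
    (hB : (0 : W × W) ∈ B) : A ⊆ cwSum A B :=
  fun p hp => ⟨p, hp, 0, hB, (add_zero p).symm⟩

lemma subset_cwSum_right {W : Type*} [AddCommGroup W] {A : Set (W × W)} (B : Set (W × W))
    (hA : (0 : W × W) ∈ A) : B ⊆ cwSum A B :=
  fun p hp => ⟨0, hA, p, hp, (zero_add p).symm⟩

lemma mulSet_inter_subset (A B : Set (V × V)) (l : ℂ) :
    mulSet (A ∩ B) ⊆ ranSet (shiftRel A l) ∩ ranSet (shiftRel B l) := by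
  intro z hz
  exact ⟨⟨0, (0, z), hz.1, by simp⟩, ⟨0, (0, z), hz.2, by simp⟩⟩

lemma mem_ranSet_shiftRel {A : Set (V × V)} {l : ℂ} {z : V} :
    z ∈ ranSet (shiftRel A l) ↔ ∃ a ∈ A, a.2 - l • a.1 = z := by
  constructor
  · rintro ⟨_, a, ha, hp⟩
    exact ⟨a, ha, (Prod.ext_iff.mp hp).2.symm⟩
  · rintro ⟨a, ha, rfl⟩
    exact ⟨a.1, a, ha, rfl⟩

lemma mk_smul_mem_cwSum_iff (A : Set (V × V)) (N : Submodule ℂ (V × V)) (l : ℂ) (x : V) :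
    (x, l • x) ∈ cwSum A N ↔
      ∃ a ∈ A, ∃ c ∈ N, x = a.1 - c.1 ∧ a.2 - l • a.1 = c.2 - l • c.1 := by
  constructor
  · rintro ⟨a, ha, b, hb, hab⟩
    rw [Prod.ext_iff] at hab
    obtain ⟨hx, hlx⟩ := hab
    simp only [Prod.fst_add, Prod.snd_add] at hx hlx
    refine ⟨a, ha, -b, N.neg_mem hb, by simp [hx], ?_⟩
    simp only [Prod.fst_neg, Prod.snd_neg, smul_neg]
    rw [hx, smul_add] at hlx
    linear_combination (norm := module) -hlx
  · rintro ⟨a, ha, c, hc, hx, hac⟩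
    refine ⟨a, ha, -c, N.neg_mem hc, Prod.ext ?_ ?_⟩
    · simp [hx, sub_eq_add_neg]
    · simp only [Prod.snd_add, Prod.snd_neg, hx, smul_sub]
      linear_combination (norm := module) -hac

lemma mk_smul_mem_of_zero_shift_mem {T : Submodule ℂ (V × V)} {l : ℂ} {a : V × V}
    (ha : a ∈ T) (hz : ((0 : V), a.2 - l • a.1) ∈ T) : (a.1, l • a.1) ∈ T := by
  convert T.sub_mem ha hz using 1
  ext <;> simp

lemma ranSet_shiftRel_inter_subset_mulSet (T N : Submodule ℂ (V × V))
    (htriv : domSet ((T ⊓ N : Submodule ℂ (V × V)) : Set (V × V)) = {0}) {l : ℂ}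
    (hl : l ∉ pointSpec (cwSum (T : Set (V × V)) N)) :
    ranSet (shiftRel (T : Set (V × V)) l) ∩ ranSet (shiftRel (N : Set (V × V)) l) ⊆
      mulSet ((T ⊓ N : Submodule ℂ (V × V)) : Set (V × V)) := by
  rintro z ⟨hzT, hzN⟩
  obtain ⟨a, ha, rfl⟩ := mem_ranSet_shiftRel.mp hzT
  obtain ⟨c, hc, hac⟩ := mem_ranSet_shiftRel.mp hzN
  have hdiff : a.1 - c.1 = 0 :=
    eq_zero_of_notMem_pointSpec hl
      ((mk_smul_mem_cwSum_iff _ N l _).mpr ⟨a, ha, c, hc, rfl, hac.symm⟩)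
  have hfst : a.1 = c.1 := sub_eq_zero.mp hdiff
  have hsnd : a.2 = c.2 := by rw [hfst] at hac; exact (sub_left_injective hac).symm
  have haTN : a ∈ T ⊓ N := ⟨ha, by rwa [Prod.ext hfst hsnd]⟩
  have ha0 : a.1 = 0 := by
    have : a.1 ∈ domSet ((T ⊓ N : Submodule ℂ (V × V)) : Set (V × V)) := ⟨a.2, haTN⟩
    rwa [htriv] at this
  show ((0 : V), a.2 - l • a.1) ∈ T ⊓ N
  rwa [ha0, smul_zero, sub_zero, ← ha0]

lemma notMem_pointSpec_cwSum {T N : Submodule ℂ (V × V)} {l : ℂ}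
    (hO : l ∈ Oset (T : Set (V × V)) N ((T ⊓ N : Submodule ℂ (V × V)) : Set (V × V)))
    (hT : l ∉ pointSpec (T : Set (V × V))) (hN : l ∉ pointSpec (N : Set (V × V))) :
    l ∉ pointSpec (cwSum (T : Set (V × V)) N) := by
  rintro ⟨x, hx0, hx⟩
  obtain ⟨a, ha, c, hc, rfl, hac⟩ := (mk_smul_mem_cwSum_iff _ N l x).mp hx
  have hz : ((0 : V), a.2 - l • a.1) ∈ T ⊓ N := by
    show a.2 - l • a.1 ∈ mulSet ((T ⊓ N : Submodule ℂ (V × V)) : Set (V × V))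
    rw [← hO]
    exact ⟨mem_ranSet_shiftRel.mpr ⟨a, ha, rfl⟩, mem_ranSet_shiftRel.mpr ⟨c, hc, hac.symm⟩⟩
  have ha0 : a.1 = 0 :=
    eq_zero_of_notMem_pointSpec hT (mk_smul_mem_of_zero_shift_mem ha hz.1)
  have hc0 : c.1 = 0 :=
    eq_zero_of_notMem_pointSpec hN (mk_smul_mem_of_zero_shift_mem hc (hac ▸ hz.2))
  exact hx0 (by rw [ha0, hc0, sub_zero])

lemma notMem_pointSpec_cwSum_iff (T N : Submodule ℂ (V × V))
    (htriv : domSet ((T ⊓ N : Submodule ℂ (V × V)) : Set (V × V)) = {0}) (l : ℂ) :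
    l ∉ pointSpec (cwSum (T : Set (V × V)) N) ↔
      l ∈ Oset (T : Set (V × V)) N ((T ⊓ N : Submodule ℂ (V × V)) : Set (V × V)) ∧
        l ∉ pointSpec (T : Set (V × V)) ∧ l ∉ pointSpec (N : Set (V × V)) := by
  refine ⟨fun hl => ⟨?_, ?_, ?_⟩, fun ⟨hO, hT, hN⟩ => notMem_pointSpec_cwSum hO hT hN⟩
  · refine (ranSet_shiftRel_inter_subset_mulSet T N htriv hl).antisymm ?_
    rw [Submodule.coe_inf]
    exact mulSet_inter_subset _ _ l
  · exact fun hT => hl (pointSpec_mono (subset_cwSum_left _ N.zero_mem) hT)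
  · exact fun hN => hl (pointSpec_mono (subset_cwSum_right _ T.zero_mem) hN)

/-- Corollary 3.3: if `D_{T∩N} = {0}` then
`ℂ ∖ σ_p(T +̂ N) = O ∖ (σ_p(T) ∪ σ_p(N))`, and in particular
`σ_p(T +̂ N) = σ_p(T) ∪ σ_p(N) ∪ (ℂ ∖ O)`. -/
theorem statement11 (T N : Submodule ℂ (V × V))
    (htriv : domSet ((T ⊓ N : Submodule ℂ (V × V)) : Set (V × V)) = {0}) :
    (Set.univ \ pointSpec (cwSum (T : Set (V × V)) (N : Set (V × V)))
        = Oset (T : Set (V × V)) (N : Set (V × V))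
            ((T ⊓ N : Submodule ℂ (V × V)) : Set (V × V))
          \ (pointSpec (T : Set (V × V)) ∪ pointSpec (N : Set (V × V)))) ∧
    pointSpec (cwSum (T : Set (V × V)) (N : Set (V × V)))
        = pointSpec (T : Set (V × V)) ∪ pointSpec (N : Set (V × V)) ∪
          (Set.univ \ Oset (T : Set (V × V)) (N : Set (V × V))
            ((T ⊓ N : Submodule ℂ (V × V)) : Set (V × V))) := by
  have key := notMem_pointSpec_cwSum_iff T N htriv
  constructor <;> ext l <;> have := key l
  · simp only [Set.mem_sdiff, Set.mem_univ, true_and, Set.mem_union]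
    tauto
  · simp only [Set.mem_union, Set.mem_sdiff, Set.mem_univ, true_and]
    tauto
end
end
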